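/- Let 0 < r < 1 and 1 ≤ p < ∞. The inclusion ℓ_p ⊆ t_p^r is strict: there exists a sequence x with T(r)x ∈ ℓ_p but x ∉ ℓ_p. -/

import Mathlib

noncomputable def taylorEntry (r : ℝ) (n k : ℕ) : ℝ :=
  if n ≤ k then (k.choose n : ℝ) * (1 - r) ^ (n + 1) * r ^ (k - n) else 0

noncomputable def taylorTransform (r : ℝ) (x : ℕ → ℝ) (n : ℕ) : ℝ :=
  ∑' k, taylorEntry r n k * x k

/-- The Taylor sequence space `t_p^r`. -/
def TaylorLp (r p : ℝ) : Set (ℕ → ℝ) :=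
  {x | (∀ n, Summable fun k => |taylorEntry r n k * x k|) ∧
    Summable fun n => |taylorTransform r x n| ^ p}

/-!
The alternating sequence `x k = (-1) ^ k` is not in `ℓ_p`, but its Taylor transform is geometric:
row `n` of `T(r)` sums against `z ^ k` by the negative binomial series
`∑ j, C(n + j, n) w ^ j = (1 - w) ^ (-(n + 1))` at `w = r z`, so at `z = -1` we get
`(T(r)x) n = (-1) ^ n q ^ (n + 1)` with `q = (1 - r) / (1 + r) ∈ (0, 1)`.
-/
theorem taylorEntry_of_lt {r : ℝ} {n k : ℕ} (h : k < n) : taylorEntry r n k = 0 := by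
  simp [taylorEntry, Nat.not_le.mpr h]

theorem taylorEntry_add_self (r : ℝ) (n j : ℕ) :
    taylorEntry r n (j + n) = ((j + n).choose n : ℝ) * (1 - r) ^ (n + 1) * r ^ j := by
  simp [taylorEntry]

theorem hasSum_taylorEntry_mul_pow {r z : ℝ} (h : |r * z| < 1) (n : ℕ) :
    HasSum (fun k => taylorEntry r n k * z ^ k)
      ((1 - r) ^ (n + 1) * z ^ n / (1 - r * z) ^ (n + 1)) := by
  have hbinom := (hasSum_choose_mul_geometric_of_norm_lt_one n (r := r * z) h).mul_left
    ((1 - r) ^ (n + 1) * z ^ n)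
  rw [← hasSum_nat_add_iff' n, Finset.sum_eq_zero fun k hk =>
    by rw [taylorEntry_of_lt (Finset.mem_range.mp hk), zero_mul], sub_zero]
  have hterm : (fun j => taylorEntry r n (j + n) * z ^ (j + n)) =
      fun j => (1 - r) ^ (n + 1) * z ^ n * ((j + n).choose n * (r * z) ^ j) := by
    funext j
    rw [taylorEntry_add_self]
    ring
  rw [hterm, div_eq_mul_one_div]
  exact hbinom

theorem taylorTransform_neg_one_pow {r : ℝ} (hr : |r| < 1) (n : ℕ) :
    taylorTransform r (fun k => (-1) ^ k) n = (-1) ^ n * ((1 - r) / (1 + r)) ^ (n + 1) := by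
  have h : |r * -1| < 1 := by rwa [mul_neg_one, abs_neg]
  rw [taylorTransform, (hasSum_taylorEntry_mul_pow h n).tsum_eq, div_pow]
  ring

theorem neg_one_pow_mem_taylorLp {r p : ℝ} (hr0 : 0 < r) (hr1 : r < 1) (hp : 0 < p) :
    (fun k => (-1 : ℝ) ^ k) ∈ TaylorLp r p := by
  have hr : |r| < 1 := abs_lt.mpr ⟨by linarith, hr1⟩
  have h : |r * -1| < 1 := by rwa [mul_neg_one, abs_neg]
  set q := (1 - r) / (1 + r)
  have hq0 : 0 < q := div_pos (by linarith) (by linarith)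
  have hq1 : q < 1 := (div_lt_one (by linarith)).mpr (by linarith)
  refine ⟨fun n => (hasSum_taylorEntry_mul_pow h n).summable.abs, ?_⟩
  have hterm : ∀ n, |taylorTransform r (fun k => (-1) ^ k) n| ^ p = q ^ p * (q ^ p) ^ n := by
    intro n
    rw [taylorTransform_neg_one_pow hr, abs_mul, abs_pow, abs_neg, abs_one, one_pow, one_mul,
      abs_of_pos (pow_pos hq0 _), ← Real.rpow_natCast, ← Real.rpow_mul hq0.le, mul_comm,
      Real.rpow_mul hq0.le, Real.rpow_natCast, pow_succ']
  simp only [hterm]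
  exact (summable_geometric_of_lt_one (by positivity) (Real.rpow_lt_one hq0.le hq1 hp)).mul_left _

theorem not_summable_abs_neg_one_pow_rpow (p : ℝ) :
    ¬ Summable fun k : ℕ => |(-1 : ℝ) ^ k| ^ p := by
  simp [summable_const_iff]

/-- For `0 < r < 1` and `1 ≤ p < ∞`, the inclusion `ℓ_p ⊆ t_p^r` is strict : there is a
sequence `x ∈ t_p^r` (i.e. `T(r)x ∈ ℓ_p`) with `x ∉ ℓ_p`. -/
theorem lp_subset_taylorLp_strict (r p : ℝ) (hr0 : 0 < r) (hr1 : r < 1) (hp : 1 ≤ p) :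
    ∃ x : ℕ → ℝ, x ∈ TaylorLp r p ∧ ¬ Summable fun k => |x k| ^ p :=
  ⟨_, neg_one_pow_mem_taylorLp hr0 hr1 (by linarith), not_summable_abs_neg_one_pow_rpow p⟩
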